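/- arXiv:1810.08256 — 2 statements merged into one kernel-verified Lean document; each statement's English description precedes it below -/
import Mathlib

section
/- Let n ≥ 3, m ≥ 3, G¹ ∈ {Pₙ, Cₙ}, G² ∈ {Pₘ, Cₘ}, and let S be a global defensive alliance of G¹ ∘ G². Denote by sᵢ the number of vertices of S in the i-th copy of G². If 2 ≤ i ≤ n−1 and 1 ≤ sᵢ < m, then s_{i−1} + s_{i+1} ≥ m. -/
/-- Lexicographic product of simple graphs. -/
def lexProd {α β : Type*} (G : SimpleGraph α) (H : SimpleGraph β) :
    SimpleGraph (α × β) where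
  Adj x y := G.Adj x.1 y.1 ∨ (x.1 = y.1 ∧ H.Adj x.2 y.2)
  symm := by
    constructor
    rintro x y (h | ⟨h1, h2⟩)
    · exact Or.inl h.symm
    · exact Or.inr ⟨h1.symm, h2.symm⟩
  loopless := by
    constructor
    rintro x (h | ⟨_, h2⟩)
    · exact G.loopless.irrefl _ h
    · exact H.loopless.irrefl _ h2

/-- Closed neighborhood N[v]. -/
def closedNbhd {α : Type*} (G : SimpleGraph α) (v : α) : Set α :=
  insert v (G.neighborSet v)

/-- A defensive alliance: every vertex of S is defended. -/
def IsDefensiveAlliance {α : Type*} (G : SimpleGraph α) (S : Set α) : Prop :=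
  ∀ v ∈ S, ((closedNbhd G v) \ S).ncard ≤ ((closedNbhd G v) ∩ S).ncard

/-- A global defensive alliance: a defensive alliance which is also dominating. -/
def IsGDA {α : Type*} (G : SimpleGraph α) (S : Set α) : Prop :=
  IsDefensiveAlliance G S ∧ ∀ v, v ∈ S ∨ ∃ u ∈ S, G.Adj v u

/-- The global defensive alliance number. -/
noncomputable def gdaNumber {α : Type*} (G : SimpleGraph α) : ℕ :=
  sInf {k | ∃ S : Set α, IsGDA G S ∧ S.ncard = k}

/-- Number of vertices of S in the j-th copy of G² (copies indexed 1,…,n). -/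
noncomputable def copyCount {n m : ℕ} (S : Set (Fin n × Fin m)) (j : ℕ) : ℕ :=
  (S ∩ {p | (p.1 : ℕ) + 1 = j}).ncard

/-!
Let `i` be an inner vertex of `G¹` whose copy meets `S` without being contained in it. Since `G²`
is connected, some `x` with `(i, x) ∈ S` has a neighbour `y` with `(i, y) ∉ S`. The closed
neighbourhood of `(i, x)` consists of the copies `i - 1` and `i + 1` together with `{i} × N[x]`,
where `|N[x]| ≤ 3` and `y ∈ N[x]`. The defence condition at `(i, x)` therefore gives
`(m - sᵢ₋₁) + (m - sᵢ₊₁) + 1 ≤ sᵢ₋₁ + sᵢ₊₁ + 2`, and `sᵢ₋₁ + sᵢ₊₁ ≥ m` by integrality.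
-/

open Set

theorem closedNbhd_lexProd {α β : Type*} (G : SimpleGraph α) (H : SimpleGraph β) (a : α)
    (x : β) :
    closedNbhd (lexProd G H) (a, x) =
      G.neighborSet a ×ˢ (univ : Set β) ∪ Prod.mk a '' closedNbhd H x := by
  ext ⟨b, z⟩
  simp only [closedNbhd, lexProd, mem_insert_iff, SimpleGraph.mem_neighborSet, Prod.mk.injEq,
    mem_union, mem_prod, mem_univ, and_true, mem_image]
  grind

theorem ncard_finset_prod_univ_inter {α β : Type*} [Finite β] (T : Finset α)
    (S : Set (α × β)) :
    ((↑T ×ˢ (univ : Set β)) ∩ S).ncard = ∑ b ∈ T, (Prod.mk b ⁻¹' S).ncard := by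
  classical
  induction T using Finset.induction_on with
  | empty => simp
  | insert b T hb ih =>
    have hdisj : Disjoint (Prod.mk b '' univ ∩ S) (↑T ×ˢ univ ∩ S) :=
      (disjoint_left.2 (by rintro _ ⟨z, -, rfl⟩ ⟨hb', -⟩; exact hb hb')).mono
        inter_subset_left inter_subset_left
    rw [Finset.coe_insert, insert_prod, union_inter_distrib_right, ncard_union_eq hdisj,
      ← image_inter_preimage, ncard_image_of_injective _ (Prod.mk_right_injective b), univ_inter,
      ih, Finset.sum_insert hb]

theorem IsDefensiveAlliance.degree_mul_card_add_le_lexProd {α β : Type*} [Finite β]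
    {G : SimpleGraph α} {H : SimpleGraph β} {S : Set (α × β)}
    (hS : IsDefensiveAlliance (lexProd G H) S) {a : α} [Fintype (G.neighborSet a)] {x : β}
    (hax : (a, x) ∈ S) :
    G.degree a * Nat.card β + (closedNbhd H x \ Prod.mk a ⁻¹' S).ncard ≤
      2 * ∑ b ∈ G.neighborFinset a, (Prod.mk b ⁻¹' S).ncard +
        (closedNbhd H x ∩ Prod.mk a ⁻¹' S).ncard := by
  have hdisj : Disjoint (G.neighborSet a ×ˢ (univ : Set β)) (Prod.mk a '' closedNbhd H x) :=
    disjoint_left.2 (by rintro _ ⟨ha, -⟩ ⟨z, -, rfl⟩; exact G.loopless.irrefl a ha)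
  have hdef := hS _ hax
  rw [closedNbhd_lexProd, union_sdiff_distrib, union_inter_distrib_right,
    ncard_union_eq (hdisj.mono sdiff_subset sdiff_subset),
    ncard_union_eq (hdisj.mono inter_subset_left inter_subset_left),
    ← image_inter_preimage, ← image_sdiff_preimage,
    ncard_image_of_injective _ (Prod.mk_right_injective a),
    ncard_image_of_injective _ (Prod.mk_right_injective a), ← G.coe_neighborFinset,
    ncard_finset_prod_univ_inter] at hdef
  have hsplit := ncard_inter_add_ncard_sdiff_eq_ncard (G.neighborSet a ×ˢ (univ : Set β)) S
  rw [ncard_prod, ncard_univ, ← G.coe_neighborFinset, ncard_coe_finset,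
    G.card_neighborFinset_eq_degree, ncard_finset_prod_univ_inter] at hsplit
  omega

theorem SimpleGraph.Preconnected.exists_adj_mem_notMem {V : Type*} {G : SimpleGraph V}
    (hG : G.Preconnected) {A : Set V} {u v : V} (hu : u ∈ A) (hv : v ∉ A) :
    ∃ x ∈ A, ∃ y ∉ A, G.Adj x y := by
  obtain ⟨w⟩ := hG u v
  obtain ⟨d, -, hd, hd'⟩ := w.exists_boundary_dart A hu hv
  exact ⟨d.fst, hd, d.snd, hd', d.adj⟩

namespace SimpleGraph

theorem cycleGraph_adj_iff_pathGraph_adj {n : ℕ} {u v : Fin n} (hu₀ : 0 < (u : ℕ))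
    (hu : (u : ℕ) + 1 < n) : (cycleGraph n).Adj u v ↔ (pathGraph n).Adj u v := by
  refine ⟨fun h => ?_, fun h => pathGraph_le_cycleGraph h⟩
  rw [cycleGraph_adj'] at h
  rw [pathGraph_adj]
  rcases lt_trichotomy v u with hvu | rfl | huv
  · rw [Fin.coe_sub_iff_le.2 hvu.le, Fin.coe_sub_iff_lt.2 hvu] at h
    omega
  · rw [Fin.coe_sub_iff_le.2 le_rfl] at h
    omega
  · rw [Fin.coe_sub_iff_lt.2 huv, Fin.coe_sub_iff_le.2 huv.le] at h
    omega

theorem neighborFinset_eq_pair_of_pos_of_lt {n : ℕ} {G : SimpleGraph (Fin n)}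
    (hG : G = pathGraph n ∨ G = cycleGraph n) {u : Fin n} [Fintype (G.neighborSet u)]
    (hu₀ : 0 < (u : ℕ)) (hu : (u : ℕ) + 1 < n) :
    G.neighborFinset u = {⟨u - 1, by omega⟩, ⟨u + 1, hu⟩} := by
  have hadj : G.Adj u = (pathGraph n).Adj u := by
    rcases hG with rfl | rfl
    · rfl
    · ext v
      exact cycleGraph_adj_iff_pathGraph_adj hu₀ hu
  ext v
  simp only [mem_neighborFinset, hadj, pathGraph_adj, Finset.mem_insert, Finset.mem_singleton,
    Fin.ext_iff]
  omega

theorem preconnected_and_le_cycleGraph {n : ℕ} {G : SimpleGraph (Fin n)}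
    (hG : G = pathGraph n ∨ G = cycleGraph n) : G.Preconnected ∧ G ≤ cycleGraph n := by
  rcases hG with rfl | rfl
  exacts [⟨pathGraph_preconnected n, pathGraph_le_cycleGraph⟩,
    ⟨cycleGraph_preconnected, le_rfl⟩]

theorem ncard_neighborSet_cycleGraph_le_two {n : ℕ} (v : Fin n) :
    ((cycleGraph n).neighborSet v).ncard ≤ 2 := by
  match n with
  | 0 => exact v.elim0
  | 1 => simp [cycleGraph_one_eq_bot]
  | k + 2 =>
    rw [cycleGraph_neighborSet]
    exact (ncard_insert_le _ _).trans (by rw [ncard_singleton])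

end SimpleGraph

theorem ncard_closedNbhd_le_three {n : ℕ} {G : SimpleGraph (Fin n)}
    (hG : G ≤ SimpleGraph.cycleGraph n) (v : Fin n) : (closedNbhd G v).ncard ≤ 3 :=
  (ncard_insert_le _ _).trans <| Nat.succ_le_succ <|
    (ncard_le_ncard (G.neighborSet_mono hG v)).trans
      (SimpleGraph.ncard_neighborSet_cycleGraph_le_two v)

theorem copyCount_val_add_one {n m : ℕ} (S : Set (Fin n × Fin m)) (b : Fin n) :
    copyCount S ((b : ℕ) + 1) = (Prod.mk b ⁻¹' S).ncard := by
  rw [copyCount, ← ncard_image_of_injective (Prod.mk b ⁻¹' S) (Prod.mk_right_injective b),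
    image_preimage_eq_inter_range]
  congr 2
  ext ⟨c, z⟩
  simp [Fin.ext_iff, eq_comm]

theorem IsDefensiveAlliance.two_mul_card_add_le_copyCount {n m : ℕ}
    {G : SimpleGraph (Fin n)} {H : SimpleGraph (Fin m)}
    (hG : G = SimpleGraph.pathGraph n ∨ G = SimpleGraph.cycleGraph n)
    {S : Set (Fin n × Fin m)} (hS : IsDefensiveAlliance (lexProd G H) S) {u : Fin n}
    (hu₀ : 0 < (u : ℕ)) (hu : (u : ℕ) + 1 < n) {x : Fin m} (hx : (u, x) ∈ S) :
    2 * m + (closedNbhd H x \ Prod.mk u ⁻¹' S).ncard ≤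
      2 * (copyCount S u + copyCount S (u + 2)) + (closedNbhd H x ∩ Prod.mk u ⁻¹' S).ncard := by
  classical
  have hdef := hS.degree_mul_card_add_le_lexProd hx
  have hne : (⟨u - 1, by omega⟩ : Fin n) ≠ ⟨u + 1, hu⟩ := by simp [Fin.ext_iff]
  rw [← G.card_neighborFinset_eq_degree,
    SimpleGraph.neighborFinset_eq_pair_of_pos_of_lt hG hu₀ hu, Finset.card_pair hne,
    Finset.sum_pair hne, Nat.card_fin, ← copyCount_val_add_one, ← copyCount_val_add_one,
    Nat.sub_add_cancel hu₀] at hdef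
  exact hdef

theorem stmt_15_general (n m : ℕ)
    (G1 : SimpleGraph (Fin n))
    (hG1 : G1 = SimpleGraph.pathGraph n ∨ G1 = SimpleGraph.cycleGraph n)
    (G2 : SimpleGraph (Fin m))
    (hG2 : G2 = SimpleGraph.pathGraph m ∨ G2 = SimpleGraph.cycleGraph m)
    (S : Set (Fin n × Fin m)) (hS : IsGDA (lexProd G1 G2) S) :
    ∀ i : ℕ, 2 ≤ i → i ≤ n - 1 → 1 ≤ copyCount S i → copyCount S i < m →
      m ≤ copyCount S (i - 1) + copyCount S (i + 1) := by
  intro i hi₂ hin hs₁ hs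
  obtain ⟨a, rfl⟩ : ∃ a, i = a + 1 := ⟨i - 1, by omega⟩
  set u : Fin n := ⟨a, by omega⟩
  set A := Prod.mk u ⁻¹' S
  have hA : copyCount S (a + 1) = A.ncard := copyCount_val_add_one S u
  obtain ⟨z₀, hz₀⟩ : A.Nonempty := nonempty_of_ncard_ne_zero (by omega)
  obtain ⟨z₁, hz₁⟩ : ∃ z, z ∉ A := by
    by_contra! h
    rw [eq_univ_of_forall h, ncard_univ, Nat.card_fin] at hA
    omega
  obtain ⟨hconn, hcycle⟩ := SimpleGraph.preconnected_and_le_cycleGraph hG2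
  obtain ⟨x, hx, y, hy, hxy⟩ := hconn.exists_adj_mem_notMem hz₀ hz₁
  have hdef : 2 * m + (closedNbhd G2 x \ A).ncard ≤
      2 * (copyCount S a + copyCount S (a + 2)) + (closedNbhd G2 x ∩ A).ncard :=
    hS.1.two_mul_card_add_le_copyCount hG1 (show 0 < a by omega) (show a + 1 < n by omega) hx
  have hsplit := ncard_inter_add_ncard_sdiff_eq_ncard (closedNbhd G2 x) A
  have hout : 0 < (closedNbhd G2 x \ A).ncard := (ncard_pos).2 ⟨y, mem_insert_of_mem _ hxy, hy⟩
  have h3 := ncard_closedNbhd_le_three hcycle x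
  show m ≤ copyCount S a + copyCount S (a + 2)
  omega

theorem stmt_15 (n m : ℕ) (hn : 3 ≤ n) (hm : 3 ≤ m)
    (G1 : SimpleGraph (Fin n))
    (hG1 : G1 = SimpleGraph.pathGraph n ∨ G1 = SimpleGraph.cycleGraph n)
    (G2 : SimpleGraph (Fin m))
    (hG2 : G2 = SimpleGraph.pathGraph m ∨ G2 = SimpleGraph.cycleGraph m)
    (S : Set (Fin n × Fin m)) (hS : IsGDA (lexProd G1 G2) S) :
    ∀ i : ℕ, 2 ≤ i → i ≤ n - 1 → 1 ≤ copyCount S i → copyCount S i < m →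
      m ≤ copyCount S (i - 1) + copyCount S (i + 1) :=
  stmt_15_general n m G1 hG1 G2 hG2 S hS
end

section
/- For every n ≥ 8, the global defensive alliance number of Pₙ ∘ P₃ equals 5·(n/5) if n ≡ 0 (mod 5), equals 5·(n−6)/5 + 8 if n ≡ 1 (mod 5), equals 5·(n−r)/5 + 4 if n ≡ r (mod 5) with r ∈ {2,3}, and equals 5·(n−4)/5 + 5 if n ≡ 4 (mod 5). -/
namespace GDAP
open Finset

def N3 : Fin 3 → Finset (Fin 3)
  | 0 => {0, 1}
  | 1 => {0, 1, 2}
  | 2 => {1, 2}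

def Cond (pr nx : Bool) (b : ℕ) (T : Finset (Fin 3)) : Prop :=
  (∀ p ∈ T, 3 * (pr.toNat + nx.toNat) + (N3 p).card ≤ 2 * (b + ((N3 p) ∩ T).card)) ∧
  (∀ p ∉ T, 1 ≤ b + (((N3 p).erase p) ∩ T).card)

instance (pr nx : Bool) (b : ℕ) (T : Finset (Fin 3)) : Decidable (Cond pr nx b T) := by
  unfold Cond; infer_instance

def PSI : List (List (List Int)) := [[[0, 0, 0, 1, 0, 1, 1, 2], [0, 1, 1, 2, 1, 2, 2, 3], [20, 1, 1, 2, 1, 2, 2, 3], [1, 2, 2, 3, 2, 3, 3, 4], [0, 1, 1, 2, 1, 2, 2, 3], [1, 2, 2, 3, 2, 3, 3, 4], [1, 2, 2, 3, 2, 3, 3, 4], [2, 3, 3, 4, 3, 4, 4, 5]], [[-1, 0, 0, 1, 0, 1, 1, 2], [2, 2, 2, 2, 2, 2, 2, 2], [20, 3, 3, 3, 3, 3, 3, 3], [3, 3, 3, 3, 3, 3, 3, 3], [2, 2, 2, 2, 2, 2, 2, 2], [3, 3, 3, 3, 3, 3, 3, 3], [3, 3, 3, 3, 3, 3, 3, 3],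 [3, 3, 3, 3, 3, 3, 3, 4]], [[1, -1, -1, 0, -1, 0, 0, 1], [2, 3, 3, 3, 3, 3, 3, 2], [20, 3, 3, 4, 3, 4, 4, 4], [2, 3, 3, 3, 3, 3, 3, 3], [2, 3, 3, 3, 3, 3, 3, 2], [2, 3, 3, 3, 3, 3, 3, 3], [2, 3, 3, 3, 3, 3, 3, 3], [2, 2, 2, 3, 2, 3, 3, 4]], [[1, 1, 1, 2, 1, 2, 2, 3], [1, 2, 2, 3, 2, 3, 3, 1], [20, 2, 2, 3, 2, 3, 3, 4], [2, 3, 3, 4, 3, 4, 4, 2], [1, 2, 2, 3, 2, 3, 3, 1], [2, 3, 3, 4, 3, 4, 4, 2], [2, 3, 3, 4, 3, 4, 4, 2], [2, 2, 2, 2, 2, 2, 2, 3]], [[0, 1, 1, 2, 1, 2, 2, 3], [1, 2, 2, 3, 2, 3, 3, 3], [20, 2, 2, 3, 2, 3, 3, 4], [1, 2, 2, 3, 2, 3, 3, 4], [1, 2, 2, 3, 2, 3, 3, 3], [1, 2, 2, 3, 2, 3, 3, 4], [1, 2, 2, 3, 2, 3, 3, 4], [1, 1, 1, 2, 1, 2,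 2, 3]]]
def TAB2 : List (List Int) := [[3, 1, -100, 2, 1, 2, 2, 3], [4, 2, 1, 2, 2, 2, 2, 4], [4, 2, 1, 2, 2, 2, 2, 4], [4, 3, 2, 3, 3, 3, 3, 4], [4, 2, 1, 2, 2, 2, 2, 4], [4, 3, 2, 3, 3, 3, 3, 4], [4, 3, 2, 3, 3, 3, 3, 4], [4, 4, 3, 4, 4, 4, 4, 4]]
def TAB3 : List (List Int) := [[4, 4, -100, 4, 4, 4, 4, 4], [4, 4, 4, 4, 4, 4, 4, 4], [4, 4, 4, 4, 4, 4, 4, 4], [4, 4, 4, 4, 4, 4, 4, 5], [4, 4, 4, 4, 4, 4, 4, 4], [4, 4, 4, 4, 4, 4, 4, 5], [4, 4, 4, 4, 4, 4, 4, 5], [4, 5, 4, 5, 5, 5, 5, 5]]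
def TAB4 : List (List Int) := [[4, 5, -100, 6, 5, 6, 6, 7], [5, 5, 5, 6, 5, 6, 6, 7], [5, 5, 5, 6, 5, 6, 6, 7], [5, 5, 5, 6, 5, 6, 6, 7], [5, 5, 5, 6, 5, 6, 6, 7], [5, 5, 5, 6, 5, 6, 6, 7], [5, 5, 5, 6, 5, 6, 6, 7], [5, 5, 5, 6, 5, 6, 6, 7]]

def enc (T : Finset (Fin 3)) : ℕ :=
  (if (0:Fin 3) ∈ T then 1 else 0) + (if (1:Fin 3) ∈ T then 2 else 0) + (if (2:Fin 3) ∈ T then 4 else 0)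

def psi (r : ℕ) (a b : Finset (Fin 3)) : ℤ := ((PSI.getD r []).getD (enc a) []).getD (enc b) 0

def E : Fin 5 → ℤ := ![0, 2, 2, 1, 1]

theorem L3 : ∀ r : Fin 5, ∀ a b c : Finset (Fin 3),
    Cond true true (a.card + c.card) b →
    psi (((r : ℕ) + 1) % 5) b c ≤ psi (r : ℕ) a b + (c.card : ℤ) - 1 := by decide

theorem L4 : ∀ r : Fin 5, ∀ b c : Finset (Fin 3),
    Cond true false b.card c → E r ≤ psi (r : ℕ) b c := by decide


def tabS (L : List (List Int)) (a b : Finset (Fin 3)) : ℤ := (L.getD (enc a) []).getD (enc b) 0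

def tab (m : ℕ) (a b : Finset (Fin 3)) : ℤ :=
  if m = 2 then tabS TAB2 a b
  else if m = 3 then tabS TAB3 a b
  else if m = 4 then tabS TAB4 a b
  else (m : ℤ) + psi (m % 5) a b

theorem L1 : ∀ a b : Finset (Fin 3), Cond false true b.card a →
    tabS TAB2 a b ≤ (a.card : ℤ) + b.card := by decide

theorem L2a : ∀ a b c : Finset (Fin 3), Cond true true (a.card + c.card) b →
    tabS TAB3 b c ≤ tabS TAB2 a b + (c.card : ℤ) := by decide

theorem L2b : ∀ a b c : Finset (Fin 3), Cond true true (a.card + c.card) b →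
    tabS TAB4 b c ≤ tabS TAB3 a b + (c.card : ℤ) := by decide

theorem L2c : ∀ a b c : Finset (Fin 3), Cond true true (a.card + c.card) b →
    5 + psi 0 b c ≤ tabS TAB4 a b + (c.card : ℤ) := by decide

theorem tab_step {m : ℕ} (hm : 2 ≤ m) (a b c : Finset (Fin 3))
    (h : Cond true true (a.card + c.card) b) :
    tab (m + 1) b c ≤ tab m a b + (c.card : ℤ) := by
  rcases Nat.lt_or_ge m 5 with h5 | h5
  · interval_cases m
    · simpa [tab] using L2a a b c h
    · simpa [tab] using L2b a b c h
    · simpa [tab] using L2c a b c h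
  · have h1 : ¬ (m + 1 = 2) ∧ ¬ (m + 1 = 3) ∧ ¬ (m + 1 = 4) := by omega
    have h2 : ¬ (m = 2) ∧ ¬ (m = 3) ∧ ¬ (m = 4) := by omega
    simp only [tab, h1.1, h1.2.1, h1.2.2, h2.1, h2.2.1, h2.2.2, if_false]
    have hr : m % 5 < 5 := Nat.mod_lt _ (by omega)
    have := L3 ⟨m % 5, hr⟩ a b c h
    simp only [Fin.val_mk] at this
    have hmod : (m + 1) % 5 = (m % 5 + 1) % 5 := by omega
    rw [hmod]
    push_cast
    omega

theorem tab_final {m : ℕ} (hm : 5 ≤ m) (b c : Finset (Fin 3))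
    (h : Cond true false b.card c) :
    (m : ℤ) + E ⟨m % 5, Nat.mod_lt _ (by omega)⟩ ≤ tab m b c := by
  have h2 : ¬ (m = 2) ∧ ¬ (m = 3) ∧ ¬ (m = 4) := by omega
  simp only [tab, h2.1, h2.2.1, h2.2.2, if_false]
  have := L4 ⟨m % 5, Nat.mod_lt _ (by omega)⟩ b c h
  simp only [Fin.val_mk] at this
  omega


def bcount (n : ℕ) (col : ℕ → Finset (Fin 3)) (j : ℕ) : ℕ :=
  (if 0 < j then (col (j-1)).card else 0) + (if j + 1 < n then (col (j+1)).card else 0)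

theorem lower_abstract (n : ℕ) (hn : 8 ≤ n) (col : ℕ → Finset (Fin 3))
    (h : ∀ j, j < n → Cond (decide (0 < j)) (decide (j+1 < n)) (bcount n col j) (col j)) :
    (n : ℤ) + E ⟨n % 5, Nat.mod_lt _ (by omega)⟩ ≤ ∑ j ∈ Finset.range n, ((col j).card : ℤ) := by
  have aux : ∀ m, 2 ≤ m → m ≤ n →
      tab m (col (m-2)) (col (m-1)) ≤ ∑ j ∈ Finset.range m, ((col j).card : ℤ) := by
    intro m hm
    induction m, hm using Nat.le_induction with
    | base =>
      intro h2n
      have hc := h 0 (by omega)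
      rw [show decide (0 < 0) = false from rfl, decide_eq_true (show 0+1 < n by omega)] at hc
      have hb : bcount n col 0 = (col 1).card := by
        simp only [bcount, if_pos (show 0+1 < n by omega)]; norm_num
      rw [hb] at hc
      have := L1 (col 0) (col 1) hc
      simp only [tab, if_pos rfl]
      rw [Finset.sum_range_succ, Finset.sum_range_one]
      norm_num at this ⊢
      omega
    | succ m hm ih =>
      intro hmn
      have ih' := ih (by omega)
      have hc := h (m - 1) (by omega)
      rw [decide_eq_true (show 0 < m - 1 by omega),
          show m - 1 + 1 = m from by omega, decide_eq_true (show m < n by omega)] at hc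
      have hb : bcount n col (m-1) = (col (m-2)).card + (col m).card := by
        simp only [bcount, if_pos (show 0 < m - 1 by omega), if_pos (show m - 1 + 1 < n by omega)]
        rw [show m - 1 - 1 = m - 2 from by omega, show m - 1 + 1 = m from by omega]
      rw [hb] at hc
      have step := tab_step (m := m) (by omega) (col (m-2)) (col (m-1)) (col m) hc
      rw [Finset.sum_range_succ]
      rw [show m + 1 - 2 = m - 1 from by omega, show m + 1 - 1 = m from by omega]
      calc tab (m+1) (col (m-1)) (col m) ≤ tab m (col (m-2)) (col (m-1)) + ((col m).card : ℤ) := step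
    _ ≤ (∑ j ∈ Finset.range m, ((col j).card : ℤ)) + ((col m).card : ℤ) :=
          add_le_add_left ih' _
  have hA := aux n (by omega) le_rfl
  have hc := h (n - 1) (by omega)
  rw [decide_eq_true (show 0 < n - 1 by omega),
      show n - 1 + 1 = n from by omega, show decide (n < n) = false from by simp] at hc
  have hb : bcount n col (n-1) = (col (n-2)).card := by
    simp only [bcount, if_pos (show 0 < n - 1 by omega), if_neg (show ¬ (n - 1 + 1 < n) by omega)]
    rw [show n - 1 - 1 = n - 2 from by omega]; omega
  rw [hb] at hc
  have := tab_final (show 5 ≤ n by omega) (col (n-2)) (col (n-1)) hc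
  omega

section Part1
open Finset
open scoped Classical

variable {n : ℕ} (S : Set (Fin n × Fin 3))

/-- column k as a finset of vertices -/
def colfin (n : ℕ) (k : ℕ) : Finset (Fin n × Fin 3) :=
  Finset.univ.filter fun q => (q.1 : ℕ) = k

/-- trace of S on column j -/
noncomputable def colS (S : Set (Fin n × Fin 3)) (j : ℕ) : Finset (Fin 3) :=
  Finset.univ.filter (fun p => ∃ i : Fin n, (i : ℕ) = j ∧ (i, p) ∈ S)

lemma colS_mem (i : Fin n) (p : Fin 3) : p ∈ colS S (i : ℕ) ↔ (i, p) ∈ S := by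
  simp only [colS, Finset.mem_filter, Finset.mem_univ, true_and]
  constructor
  · rintro ⟨i', hi', hmem⟩
    rwa [show i' = i from Fin.ext hi'] at hmem
  · intro h; exact ⟨i, rfl, h⟩

lemma colS_empty (j : ℕ) (hj : n ≤ j) : colS S j = ∅ := by
  ext p
  simp only [colS, Finset.mem_filter, Finset.mem_univ, true_and, Finset.notMem_empty, iff_false]
  rintro ⟨i, hi, -⟩
  exact absurd (hi ▸ i.isLt) (by omega)

lemma colfin_eq (k : ℕ) (hk : k < n) : colfin n k = {(⟨k, hk⟩ : Fin n)} ×ˢ Finset.univ := by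
  ext q
  simp only [colfin, Finset.mem_filter, Finset.mem_univ, true_and, Finset.mem_product,
    Finset.mem_singleton, and_true]
  constructor
  · intro h; exact Fin.ext h
  · intro h; rw [h]

lemma colfin_empty (k : ℕ) (hk : n ≤ k) : colfin n k = ∅ := by
  ext q
  simp only [colfin, Finset.mem_filter, Finset.mem_univ, true_and, Finset.notMem_empty, iff_false]
  intro h
  exact absurd (h ▸ q.1.isLt) (by omega)

lemma colfin_card (k : ℕ) : (colfin n k).card = if k < n then 3 else 0 := by
  split
  · next hk => rw [colfin_eq k hk]; simp
  · next hk => rw [colfin_empty k (by omega)]; simp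

lemma colfin_filter_eq (k : ℕ) (hk : k < n) :
    (colfin n k).filter (· ∈ S) = {(⟨k, hk⟩ : Fin n)} ×ˢ colS S k := by
  ext q
  simp only [Finset.mem_filter, Finset.mem_product, Finset.mem_singleton, colfin,
    Finset.mem_univ, true_and]
  constructor
  · rintro ⟨h1, h2⟩
    have hq : q.1 = (⟨k, hk⟩ : Fin n) := Fin.ext h1
    refine ⟨hq, ?_⟩
    have := (colS_mem S q.1 q.2).mpr (by rwa [Prod.mk.eta])
    rwa [h1] at this
  · rintro ⟨h1, h2⟩
    refine ⟨by rw [h1], ?_⟩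
    rw [show k = ((⟨k, hk⟩ : Fin n) : ℕ) from rfl] at h2
    have := (colS_mem S _ q.2).mp h2
    rw [← h1, Prod.mk.eta] at this
    exact this

lemma colfin_filter_card (k : ℕ) :
    ((colfin n k).filter (· ∈ S)).card = (colS S k).card := by
  rcases Nat.lt_or_ge k n with hk | hk
  · rw [colfin_filter_eq S k hk]; simp
  · rw [colfin_empty k hk, colS_empty S k hk]; simp

def NBA (n : ℕ) (i : Fin n) : Finset (Fin n × Fin 3) :=
  Finset.univ.filter fun q => ((q.1 : ℕ) + 1 = (i : ℕ) ∨ (i : ℕ) + 1 = (q.1 : ℕ))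

def NBB (n : ℕ) (i : Fin n) (p : Fin 3) : Finset (Fin n × Fin 3) :=
  Finset.univ.filter fun q => q.1 = i ∧ q.2 ∈ N3 p

def NB (n : ℕ) (i : Fin n) (p : Fin 3) : Finset (Fin n × Fin 3) := NBA n i ∪ NBB n i p

lemma N3_mem : ∀ p q : Fin 3, (q ∈ N3 p ↔ (q = p ∨ ((p : ℕ) + 1 = q ∨ (q : ℕ) + 1 = p))) := by
  decide

lemma closedNbhd_eq (i : Fin n) (p : Fin 3) :
    closedNbhd (lexProd (SimpleGraph.pathGraph n) (SimpleGraph.pathGraph 3)) (i, p)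
      = ↑(NB n i p) := by
  ext q
  simp only [closedNbhd, SimpleGraph.mem_neighborSet, Set.mem_insert_iff, lexProd,
    SimpleGraph.pathGraph_adj, NB, NBA, NBB, Finset.coe_union, Set.mem_union,
    Finset.coe_filter, Set.mem_setOf_eq, Finset.mem_univ, true_and, N3_mem,
    Prod.ext_iff, Fin.ext_iff]
  omega

lemma NBA_card (i : Fin n) :
    (NBA n i).card = (if 0 < (i : ℕ) then 3 else 0) + (if (i : ℕ) + 1 < n then 3 else 0) := by
  rw [NBA, Finset.filter_or]
  rw [Finset.card_union_of_disjoint (by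
    rw [Finset.disjoint_left]
    intro q hq hq'
    simp only [Finset.mem_filter, Finset.mem_univ, true_and] at hq hq'
    omega)]
  congr 1
  · rcases Nat.eq_zero_or_pos (i : ℕ) with h0 | h0
    · rw [if_neg (by omega)]
      rw [Finset.card_eq_zero.mpr]
      ext q
      simp only [Finset.mem_filter, Finset.mem_univ, true_and, Finset.notMem_empty, iff_false]
      omega
    · rw [if_pos h0]
      have : (Finset.univ.filter fun q : Fin n × Fin 3 => (q.1 : ℕ) + 1 = (i : ℕ))
          = colfin n ((i : ℕ) - 1) := by
        ext q
        simp only [Finset.mem_filter, Finset.mem_univ, true_and, colfin]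
        omega
      rw [this, colfin_card]
      rw [if_pos (by omega)]
  · have : (Finset.univ.filter fun q : Fin n × Fin 3 => (i : ℕ) + 1 = (q.1 : ℕ))
        = colfin n ((i : ℕ) + 1) := by
      ext q
      simp only [Finset.mem_filter, Finset.mem_univ, true_and, colfin]
      omega
    rw [this, colfin_card]

lemma NBA_filter_card (i : Fin n) :
    ((NBA n i).filter (· ∈ S)).card = bcount n (colS S) (i : ℕ) := by
  rw [NBA, Finset.filter_or, Finset.filter_union]
  rw [Finset.card_union_of_disjoint (by
    rw [Finset.disjoint_left]
    intro q hq hq'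
    simp only [Finset.mem_filter, Finset.mem_univ, true_and] at hq hq'
    omega)]
  rw [bcount]
  congr 1
  · rcases Nat.eq_zero_or_pos (i : ℕ) with h0 | h0
    · rw [if_neg (by omega)]
      rw [Finset.card_eq_zero.mpr]
      ext q
      simp only [Finset.mem_filter, Finset.mem_univ, true_and, Finset.notMem_empty, iff_false]
      omega
    · rw [if_pos h0]
      have : (Finset.univ.filter fun q : Fin n × Fin 3 => (q.1 : ℕ) + 1 = (i : ℕ))
          = colfin n ((i : ℕ) - 1) := by
        ext q
        simp only [Finset.mem_filter, Finset.mem_univ, true_and, colfin]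
        omega
      rw [this, colfin_filter_card]
  · have : (Finset.univ.filter fun q : Fin n × Fin 3 => (i : ℕ) + 1 = (q.1 : ℕ))
        = colfin n ((i : ℕ) + 1) := by
      ext q
      simp only [Finset.mem_filter, Finset.mem_univ, true_and, colfin]
      omega
    rw [this, colfin_filter_card]
    rcases Nat.lt_or_ge ((i : ℕ) + 1) n with hk | hk
    · rw [if_pos hk]
    · rw [if_neg (by omega), colS_empty S _ hk, Finset.card_empty]

lemma NBB_eq (i : Fin n) (p : Fin 3) : NBB n i p = {i} ×ˢ N3 p := by
  ext q
  simp only [NBB, Finset.mem_filter, Finset.mem_univ, true_and, Finset.mem_product,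
    Finset.mem_singleton]

lemma NBB_card (i : Fin n) (p : Fin 3) : (NBB n i p).card = (N3 p).card := by
  rw [NBB_eq]; simp

lemma NBB_filter_card (i : Fin n) (p : Fin 3) :
    ((NBB n i p).filter (· ∈ S)).card = ((N3 p) ∩ colS S (i : ℕ)).card := by
  have : (NBB n i p).filter (· ∈ S) = {i} ×ˢ ((N3 p) ∩ colS S (i : ℕ)) := by
    ext q
    simp only [Finset.mem_filter, NBB, Finset.mem_univ, true_and, Finset.mem_product,
      Finset.mem_singleton, Finset.mem_inter]
    constructor
    · rintro ⟨⟨h1, h2⟩, h3⟩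
      refine ⟨h1, h2, ?_⟩
      rw [← h1]
      exact (colS_mem S q.1 q.2).mpr (by rwa [Prod.mk.eta])
    · rintro ⟨h1, h2, h3⟩
      refine ⟨⟨h1, h2⟩, ?_⟩
      rw [← h1] at h3
      have := (colS_mem S q.1 q.2).mp h3
      rwa [Prod.mk.eta] at this
  rw [this]; simp

lemma NB_disj (i : Fin n) (p : Fin 3) : Disjoint (NBA n i) (NBB n i p) := by
  rw [Finset.disjoint_left]
  intro q hq hq'
  simp only [NBA, NBB, Finset.mem_filter, Finset.mem_univ, true_and] at hq hq'
  rcases hq' with ⟨h2, -⟩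
  rw [h2] at hq
  omega

lemma NB_card (i : Fin n) (p : Fin 3) :
    (NB n i p).card
      = (if 0 < (i : ℕ) then 3 else 0) + (if (i : ℕ) + 1 < n then 3 else 0) + (N3 p).card := by
  rw [NB, Finset.card_union_of_disjoint (NB_disj i p), NBA_card, NBB_card]

lemma NB_filter_card (i : Fin n) (p : Fin 3) :
    ((NB n i p).filter (· ∈ S)).card
      = bcount n (colS S) (i : ℕ) + ((N3 p) ∩ colS S (i : ℕ)).card := by
  rw [NB, Finset.filter_union,
    Finset.card_union_of_disjoint (Finset.disjoint_filter_filter (NB_disj i p)),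
    NBA_filter_card, NBB_filter_card]

lemma coe_filter_inter (i : Fin n) (p : Fin 3) :
    (↑((NB n i p).filter (· ∈ S)) : Set (Fin n × Fin 3)) = ↑(NB n i p) ∩ S := by
  ext q; simp [Finset.mem_filter]

lemma ncard_inter (i : Fin n) (p : Fin 3) :
    ((closedNbhd (lexProd (SimpleGraph.pathGraph n) (SimpleGraph.pathGraph 3)) (i, p)) ∩ S).ncard
      = ((NB n i p).filter (· ∈ S)).card := by
  rw [closedNbhd_eq, ← coe_filter_inter, Set.ncard_coe_finset]

lemma ncard_diff (i : Fin n) (p : Fin 3) :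
    ((closedNbhd (lexProd (SimpleGraph.pathGraph n) (SimpleGraph.pathGraph 3)) (i, p)) \ S).ncard
      = (NB n i p).card - ((NB n i p).filter (· ∈ S)).card := by
  rw [closedNbhd_eq]
  have h1 : (↑(NB n i p) \ S : Set (Fin n × Fin 3)) = ↑((NB n i p).filter (¬ · ∈ S)) := by
    ext q; simp [Finset.mem_filter]
  rw [h1, Set.ncard_coe_finset]
  have := Finset.card_filter_add_card_filter_not (s := NB n i p) (p := (· ∈ S))
  omega

lemma toNat_decide (P : Prop) [Decidable P] : (decide P).toNat = if P then 1 else 0 := by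
  by_cases h : P <;> simp [h]

lemma defense_iff (i : Fin n) (p : Fin 3) :
    (((closedNbhd (lexProd (SimpleGraph.pathGraph n) (SimpleGraph.pathGraph 3)) (i, p)) \ S).ncard
      ≤ ((closedNbhd (lexProd (SimpleGraph.pathGraph n) (SimpleGraph.pathGraph 3)) (i, p)) ∩ S).ncard)
    ↔ 3 * ((decide (0 < (i : ℕ))).toNat + (decide ((i : ℕ) + 1 < n)).toNat) + (N3 p).card
        ≤ 2 * (bcount n (colS S) (i : ℕ) + ((N3 p) ∩ colS S (i : ℕ)).card) := by
  rw [ncard_inter, ncard_diff]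
  have hle : ((NB n i p).filter (· ∈ S)).card ≤ (NB n i p).card := Finset.card_filter_le _ _
  rw [← NB_filter_card]
  rw [NB_card i p] at hle ⊢
  rw [toNat_decide, toNat_decide]
  split_ifs at hle ⊢ <;> omega

lemma erase_inter (p : Fin 3) (T : Finset (Fin 3)) (hp : p ∉ T) :
    ((N3 p).erase p) ∩ T = (N3 p) ∩ T := by
  ext q
  simp only [Finset.mem_inter, Finset.mem_erase]
  constructor
  · rintro ⟨⟨-, h2⟩, h3⟩; exact ⟨h2, h3⟩
  · rintro ⟨h2, h3⟩
    exact ⟨⟨fun hq => hp (hq ▸ h3), h2⟩, h3⟩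

lemma dominated_iff (i : Fin n) (p : Fin 3) (hv : (i, p) ∉ S) :
    (∃ u ∈ S, (lexProd (SimpleGraph.pathGraph n) (SimpleGraph.pathGraph 3)).Adj (i, p) u)
    ↔ 1 ≤ bcount n (colS S) (i : ℕ) + ((N3 p) ∩ colS S (i : ℕ)).card := by
  rw [← NB_filter_card, Finset.one_le_card]
  constructor
  · rintro ⟨u, hu, hadj⟩
    refine ⟨u, Finset.mem_filter.mpr ⟨?_, hu⟩⟩
    have : u ∈ closedNbhd (lexProd (SimpleGraph.pathGraph n) (SimpleGraph.pathGraph 3)) (i, p) :=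
      Set.mem_insert_of_mem _ hadj
    rwa [closedNbhd_eq, Finset.mem_coe] at this
  · rintro ⟨u, hu⟩
    rw [Finset.mem_filter] at hu
    refine ⟨u, hu.2, ?_⟩
    have : u ∈ closedNbhd (lexProd (SimpleGraph.pathGraph n) (SimpleGraph.pathGraph 3)) (i, p) := by
      rw [closedNbhd_eq, Finset.mem_coe]; exact hu.1
    rcases this with h | h
    · exact absurd (h ▸ hu.2) hv
    · exact h

theorem reduction :
    IsGDA (lexProd (SimpleGraph.pathGraph n) (SimpleGraph.pathGraph 3)) S ↔
      ∀ j, j < n →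
        Cond (decide (0 < j)) (decide (j + 1 < n)) (bcount n (colS S) j) (colS S j) := by
  constructor
  · rintro ⟨hdef, hdom⟩ j hj
    set i : Fin n := ⟨j, hj⟩ with hi
    have hij : (i : ℕ) = j := rfl
    constructor
    · intro p hp
      have hpS : (i, p) ∈ S := (colS_mem S i p).mp (by rwa [hij])
      have := (defense_iff S i p).mp (hdef _ hpS)
      rwa [hij] at this
    · intro p hp
      have hpS : (i, p) ∉ S := fun hmem => hp (by rw [← hij]; exact (colS_mem S i p).mpr hmem)
      rcases hdom (i, p) with h | h
      · exact absurd h hpS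
      · have := (dominated_iff S i p hpS).mp h
        rw [hij] at this
        rwa [← erase_inter p _ hp] at this
  · intro h
    constructor
    · rintro ⟨i, p⟩ hv
      have hc := h (i : ℕ) i.isLt
      have hp : p ∈ colS S (i : ℕ) := (colS_mem S i p).mpr hv
      exact (defense_iff S i p).mpr (hc.1 p hp)
    · rintro ⟨i, p⟩
      by_cases hv : (i, p) ∈ S
      · exact Or.inl hv
      · right
        have hc := h (i : ℕ) i.isLt
        have hp : p ∉ colS S (i : ℕ) := fun hmem => hv ((colS_mem S i p).mp hmem)
        have := hc.2 p hp
        rw [erase_inter p _ hp] at this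
        exact (dominated_iff S i p hv).mpr this

lemma ncard_sum : S.ncard = ∑ j ∈ Finset.range n, (colS S j).card := by
  classical
  rw [Set.ncard_eq_toFinset_card' S]
  rw [Finset.card_eq_sum_card_fiberwise
    (f := fun q : Fin n × Fin 3 => q.1) (t := Finset.univ) (fun q _ => Finset.mem_univ _)]
  rw [← Fin.sum_univ_eq_sum_range (fun j => (colS S j).card)]
  refine Finset.sum_congr rfl fun i _ => ?_
  have : (S.toFinset.filter fun q => q.1 = i) = {i} ×ˢ colS S (i : ℕ) := by
    ext q
    simp only [Finset.mem_filter, Set.mem_toFinset, Finset.mem_product, Finset.mem_singleton]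
    constructor
    · rintro ⟨h1, h2⟩
      refine ⟨h2, ?_⟩
      rw [← h2]
      exact (colS_mem S q.1 q.2).mpr (by rwa [Prod.mk.eta])
    · rintro ⟨h1, h2⟩
      rw [← h1] at h2
      have := (colS_mem S q.1 q.2).mp h2
      rw [Prod.mk.eta] at this
      exact ⟨this, h1⟩
  rw [this]
  simp

end Part1

section Part3
open Finset

def PatF : ℕ → Finset (Fin 3)
  | 1 => {0}
  | 2 => Finset.univ
  | 3 => {0}
  | _ => ∅

def shiftN (n : ℕ) : ℕ := if n % 5 = 1 then 2 else if n % 5 = 2 then 1 else 0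

def colC (n : ℕ) (j : ℕ) : Finset (Fin 3) := PatF ((j + shiftN n) % 5)

lemma patf_card_le (r : ℕ) : (PatF r).card ≤ 3 := by
  have : (PatF r).card ≤ Finset.univ.card := Finset.card_le_card (Finset.subset_univ _)
  simpa using this

lemma colC_valid {n : ℕ} (hn : 8 ≤ n) :
    ∀ j, j < n →
      Cond (decide (0 < j)) (decide (j + 1 < n)) (bcount n (colC n) j) (colC n j) := by
  intro j hj
  set s := shiftN n with hs
  have hs5 : s = 0 ∨ s = 1 ∨ s = 2 := by
    rw [hs, shiftN]; split_ifs <;> omega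
  rcases Nat.eq_zero_or_pos j with hj0 | hj0
  · -- j = 0
    subst hj0
    rw [show decide (0 < 0) = false from rfl, decide_eq_true (show 0 + 1 < n by omega)]
    have hb : bcount n (colC n) 0 = (colC n 1).card := by
      simp only [bcount, if_neg (lt_irrefl 0), if_pos (show 0 + 1 < n by omega)]
      norm_num
    rw [hb]
    rcases hs5 with h | h | h <;>
      · simp only [colC, ← hs, h]
        decide
  · rcases Nat.lt_or_ge (j + 1) n with hj1 | hj1
    · -- interior
      rw [decide_eq_true hj0, decide_eq_true hj1]
      have hb : bcount n (colC n) j = (colC n (j - 1)).card + (colC n (j + 1)).card := by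
        simp only [bcount, if_pos hj0, if_pos hj1]
      rw [hb]
      have ht : (j + s) % 5 = 0 ∨ (j + s) % 5 = 1 ∨ (j + s) % 5 = 2 ∨ (j + s) % 5 = 3 ∨
          (j + s) % 5 = 4 := by omega
      simp only [colC, ← hs]
      rcases ht with h | h | h | h | h <;>
        · rw [h, show (j - 1 + s) % 5 = ((j+s) % 5 + 4) % 5 from by omega,
            show (j + 1 + s) % 5 = ((j+s) % 5 + 1) % 5 from by omega, h]
          decide
    · -- j = n - 1
      have hjn : j = n - 1 := by omega
      rw [decide_eq_true hj0, show decide (j + 1 < n) = false from by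
        simp only [decide_eq_false_iff_not]; omega]
      have hb : bcount n (colC n) j = (colC n (j - 1)).card := by
        simp only [bcount, if_pos hj0, if_neg (show ¬ (j + 1 < n) by omega)]
        omega
      rw [hb]
      have hr : n % 5 = 0 ∨ n % 5 = 1 ∨ n % 5 = 2 ∨ n % 5 = 3 ∨ n % 5 = 4 := by omega
      simp only [colC, ← hs]
      rcases hr with h | h | h | h | h
      · rw [show s = 0 from by rw [hs, shiftN]; simp [h],
          show (j + 0) % 5 = 4 from by omega, show (j - 1 + 0) % 5 = 3 from by omega]
        decide
      · rw [show s = 2 from by rw [hs, shiftN]; simp [h],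
          show (j + 2) % 5 = 2 from by omega, show (j - 1 + 2) % 5 = 1 from by omega]
        decide
      · rw [show s = 1 from by rw [hs, shiftN]; simp [h],
          show (j + 1) % 5 = 2 from by omega, show (j - 1 + 1) % 5 = 1 from by omega]
        decide
      · rw [show s = 0 from by rw [hs, shiftN]; simp [h],
          show (j + 0) % 5 = 2 from by omega, show (j - 1 + 0) % 5 = 1 from by omega]
        decide
      · rw [show s = 0 from by rw [hs, shiftN]; simp [h],
          show (j + 0) % 5 = 3 from by omega, show (j - 1 + 0) % 5 = 2 from by omega]
        decide

lemma sum5 (s m : ℕ) :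
    ∑ j ∈ Finset.range (m + 5), (PatF ((j + s) % 5)).card
      = (∑ j ∈ Finset.range m, (PatF ((j + s) % 5)).card) + 5 := by
  rw [Finset.sum_range_succ, Finset.sum_range_succ, Finset.sum_range_succ,
    Finset.sum_range_succ, Finset.sum_range_succ]
  have ht : (m + s) % 5 = 0 ∨ (m + s) % 5 = 1 ∨ (m + s) % 5 = 2 ∨ (m + s) % 5 = 3 ∨
      (m + s) % 5 = 4 := by omega
  rcases ht with h | h | h | h | h <;>
    · rw [show (m + 1 + s) % 5 = ((m+s) % 5 + 1) % 5 from by omega,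
        show (m + 2 + s) % 5 = ((m+s) % 5 + 2) % 5 from by omega,
        show (m + 3 + s) % 5 = ((m+s) % 5 + 3) % 5 from by omega,
        show (m + 4 + s) % 5 = ((m+s) % 5 + 4) % 5 from by omega, h]
      simp [PatF]

lemma patf_sum (s : ℕ) : ∀ m, ∑ j ∈ Finset.range m, (PatF ((j + s) % 5)).card
    = 5 * (m / 5) + ∑ j ∈ Finset.range (m % 5), (PatF ((j + s) % 5)).card := by
  intro m
  induction m using Nat.strong_induction_on with
  | _ m ih =>
    rcases Nat.lt_or_ge m 5 with h5 | h5
    · rw [show m / 5 = 0 from by omega, show m % 5 = m from by omega]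
      omega
    · have := ih (m - 5) (by omega)
      rw [show m = (m - 5) + 5 from by omega, sum5, this,
        show (m - 5) % 5 = ((m - 5) + 5) % 5 from by omega]
      have : ((m - 5) + 5) / 5 = (m - 5) / 5 + 1 := by omega
      rw [this]
      ring

lemma colC_cost {n : ℕ} (hn : 8 ≤ n) :
    ∑ j ∈ Finset.range n, (colC n j).card
      = n + (if n % 5 = 0 then 0 else if n % 5 = 1 then 2 else if n % 5 = 2 then 2 else 1) := by
  simp only [colC]
  rw [patf_sum]
  have hr : n % 5 = 0 ∨ n % 5 = 1 ∨ n % 5 = 2 ∨ n % 5 = 3 ∨ n % 5 = 4 := by omega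
  rcases hr with h | h | h | h | h
  · have hs0 : shiftN n = 0 := by simp [shiftN, h]
    rw [hs0, h]
    norm_num
    omega
  · have hs2 : shiftN n = 2 := by simp [shiftN, h]
    rw [hs2, h]
    have he : (∑ j ∈ Finset.range 1, (PatF ((j + 2) % 5)).card) = 3 := by decide
    rw [he]
    norm_num
    omega
  · have hs1 : shiftN n = 1 := by simp [shiftN, h]
    rw [hs1, h]
    have he : (∑ j ∈ Finset.range 2, (PatF ((j + 1) % 5)).card) = 4 := by decide
    rw [he]
    norm_num
    omega
  · have hs0 : shiftN n = 0 := by simp [shiftN, h]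
    rw [hs0, h]
    have he : (∑ j ∈ Finset.range 3, (PatF ((j + 0) % 5)).card) = 4 := by decide
    rw [he]
    norm_num
    omega
  · have hs0 : shiftN n = 0 := by simp [shiftN, h]
    rw [hs0, h]
    have he : (∑ j ∈ Finset.range 4, (PatF ((j + 0) % 5)).card) = 5 := by decide
    rw [he]
    norm_num
    omega

end Part3

theorem gda_value {n : ℕ} (hn : 8 ≤ n) :
    gdaNumber (lexProd (SimpleGraph.pathGraph n) (SimpleGraph.pathGraph 3))
      = n + (if n % 5 = 0 then 0 else if n % 5 = 1 then 2 else if n % 5 = 2 then 2 else 1) := by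
  classical
  set K : ℕ := n + (if n % 5 = 0 then 0 else if n % 5 = 1 then 2 else if n % 5 = 2 then 2 else 1)
    with hK
  set Sup : Set (Fin n × Fin 3) := {q | q.2 ∈ colC n (q.1 : ℕ)} with hSup
  have hcolS : ∀ j, j < n → colS Sup j = colC n j := by
    intro j hj
    ext p
    simp only [colS, Finset.mem_filter, Finset.mem_univ, true_and, hSup, Set.mem_setOf_eq]
    constructor
    · rintro ⟨i, hi, hmem⟩; rwa [hi] at hmem
    · intro h; exact ⟨⟨j, hj⟩, rfl, h⟩
  have hbc : ∀ j, j < n → bcount n (colS Sup) j = bcount n (colC n) j := by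
    intro j hj
    simp only [bcount]
    congr 1
    · split
      · next h0 => rw [hcolS (j-1) (by omega)]
      · rfl
    · split
      · next h1 => rw [hcolS (j+1) (by omega)]
      · rfl
  have hgda : IsGDA (lexProd (SimpleGraph.pathGraph n) (SimpleGraph.pathGraph 3)) Sup := by
    rw [reduction]
    intro j hj
    rw [hcolS j hj, hbc j hj]
    exact colC_valid hn j hj
  have hcard : Sup.ncard = K := by
    rw [ncard_sum]
    rw [Finset.sum_congr rfl fun j hj => by rw [hcolS j (Finset.mem_range.mp hj)]]
    exact colC_cost hn
  have hmem : K ∈ {k | ∃ S : Set (Fin n × Fin 3),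
      IsGDA (lexProd (SimpleGraph.pathGraph n) (SimpleGraph.pathGraph 3)) S ∧ S.ncard = k} :=
    ⟨Sup, hgda, hcard⟩
  have hne : {k | ∃ S : Set (Fin n × Fin 3),
      IsGDA (lexProd (SimpleGraph.pathGraph n) (SimpleGraph.pathGraph 3)) S ∧ S.ncard = k}.Nonempty :=
    ⟨K, hmem⟩
  refine le_antisymm (Nat.sInf_le hmem) ?_
  obtain ⟨S₀, h₀, hc₀⟩ := Nat.sInf_mem hne
  rw [gdaNumber, ← hc₀]
  have hlow := lower_abstract n hn (colS S₀) ((reduction S₀).mp h₀)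
  have hEe : (if n % 5 = 0 then (0:ℤ) else if n % 5 = 1 then 2 else if n % 5 = 2 then 2 else 1)
      ≤ E ⟨n % 5, Nat.mod_lt _ (by omega)⟩ := by
    have hr : n % 5 = 0 ∨ n % 5 = 1 ∨ n % 5 = 2 ∨ n % 5 = 3 ∨ n % 5 = 4 := by omega
    rcases hr with h | h | h | h | h <;> simp only [h] <;> norm_num <;> exact le_of_eq rfl
  have hsum : S₀.ncard = ∑ j ∈ Finset.range n, (colS S₀ j).card := ncard_sum S₀
  have hcast : ((S₀.ncard : ℤ)) = ∑ j ∈ Finset.range n, ((colS S₀ j).card : ℤ) := by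
    rw [hsum]; push_cast; rfl
  have : (K : ℤ) ≤ (S₀.ncard : ℤ) := by
    rw [hcast, hK]
    push_cast
    split_ifs at hEe ⊢ <;> omega
  exact_mod_cast this

end GDAP

theorem stmt_18 (n : ℕ) (hn : 8 ≤ n) :
    (n % 5 = 0 →
      gdaNumber (lexProd (SimpleGraph.pathGraph n) (SimpleGraph.pathGraph 3)) = 5 * (n / 5)) ∧
    (n % 5 = 1 →
      gdaNumber (lexProd (SimpleGraph.pathGraph n) (SimpleGraph.pathGraph 3)) = 5 * ((n - 6) / 5) + 8) ∧
    (∀ r ∈ ({2, 3} : Set ℕ), n % 5 = r →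
      gdaNumber (lexProd (SimpleGraph.pathGraph n) (SimpleGraph.pathGraph 3)) = 5 * ((n - r) / 5) + 4) ∧
    (n % 5 = 4 →
      gdaNumber (lexProd (SimpleGraph.pathGraph n) (SimpleGraph.pathGraph 3)) = 5 * ((n - 4) / 5) + 5) := by
  have hg := GDAP.gda_value (n := n) hn
  refine ⟨?_, ?_, ?_, ?_⟩
  · intro h; rw [hg]; simp only [h]; norm_num; omega
  · intro h; rw [hg]; simp only [h]; norm_num; omega
  · intro r hr h
    simp only [Set.mem_insert_iff, Set.mem_singleton_iff] at hr
    rcases hr with rfl | rfl <;>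
      · rw [hg]; simp only [h]; norm_num; omega
  · intro h; rw [hg]; simp only [h]; norm_num; omega
end
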